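/- A deterministic complete semi-automaton A = (Σ, Q, δ) with n states is weakly acyclic if and only if its states can be topologically sorted, i.e., there exists an enumeration q_1, …, q_n of Q (equivalently, a bijection f : Q → {1,…,n}) such that whenever δ(q_i, x) = q_j for some letter x ∈ Σ, one has i ≤ j. -/
import Mathlib


/-- The transition function extended to words: `δ*(q, u)`. -/
def deltaStar {Q A : Type*} (δ : Q → A → Q) (q : Q) (u : List A) : Q :=
  u.foldl δ q

/-- A complete deterministic semi-automaton is weakly acyclic if all simple
cycles are self-loops. -/
def WeaklyAcyclic {Q A : Type*} (δ : Q → A → Q) : Prop :=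
  ∀ (q : Q) (u : List A), u ≠ [] → deltaStar δ q u = q → ∀ x ∈ u, δ q x = q

lemma deltaStar_append {Q A : Type*} (δ : Q → A → Q) (q : Q) (u v : List A) :
    deltaStar δ q (u ++ v) = deltaStar δ (deltaStar δ q u) v :=
  List.foldl_append ..

lemma deltaStar_selfloops {Q A : Type*} (δ : Q → A → Q) (q : Q) (u : List A)
    (h : ∀ x ∈ u, δ q x = q) : deltaStar δ q u = q := by
  induction u with
  | nil => rfl
  | cons a t ih =>
    have ha : δ q a = q := h a (List.mem_cons_self ..)
    simp only [deltaStar, List.foldl_cons, ha]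
    exact ih fun x hx => h x (List.mem_cons_of_mem _ hx)

/-- A complete deterministic semi-automaton is weakly acyclic iff its states
can be topologically sorted: there is a bijective enumeration
`f : Q ≃ {1, …, n}` such that every transition is non-decreasing, i.e.,
whenever `δ(q, x) = q'`, the index of `q` is at most the index of `q'`. -/
theorem weaklyAcyclic_iff_topological_sort {Q A : Type*}
    [Fintype Q] [Nonempty Q] [Fintype A] (δ : Q → A → Q) :
    WeaklyAcyclic δ ↔
      ∃ f : Q ≃ Fin (Fintype.card Q), ∀ (q : Q) (x : A), f q ≤ f (δ q x) := by
  constructor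
  · intro h
    letI P : PartialOrder Q :=
      { le := fun p q => ∃ u : List A, deltaStar δ p u = q
        le_refl := fun p => ⟨[], rfl⟩
        le_trans := by
          rintro a b c ⟨u, hu⟩ ⟨v, hv⟩
          exact ⟨u ++ v, by rw [deltaStar_append, hu, hv]⟩
        le_antisymm := by
          rintro a b ⟨u, hu⟩ ⟨v, hv⟩
          have huv : deltaStar δ a (u ++ v) = a := by rw [deltaStar_append, hu, hv]
          rcases u with _ | ⟨x, t⟩
          · exact hu
          · have := h a ((x :: t) ++ v) (by simp) huv
            have : deltaStar δ a (x :: t) = a :=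
              deltaStar_selfloops δ a _ fun y hy => this y (List.mem_append_left _ hy)
            rw [this] at hu; exact hu }
    letI : Fintype (LinearExtension Q) := ‹Fintype Q›
    have hcard : Fintype.card (LinearExtension Q) = Fintype.card Q := rfl
    let e := monoEquivOfFin (LinearExtension Q) hcard
    let g : Q ≃ LinearExtension Q := Equiv.cast rfl
    refine ⟨g.trans e.symm.toEquiv, fun q x => ?_⟩
    have hle : q ≤ δ q x := ⟨[x], rfl⟩
    have := toLinearExtension.monotone hle
    exact e.symm.monotone this
  · rintro ⟨f, hf⟩ q u hu hq x hx
    have mono : ∀ (v : List A) (p : Q), f p ≤ f (deltaStar δ p v) := by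
      intro v
      induction v with
      | nil => intro p; exact le_refl _
      | cons a t ih =>
        intro p
        calc f p ≤ f (δ p a) := hf p a
        _ ≤ f (deltaStar δ (δ p a) t) := ih (δ p a)
    obtain ⟨s, t, rfl⟩ := List.append_of_mem hx
    have h1 : deltaStar δ q (s ++ x :: t) = q := hq
    rw [deltaStar_append] at h1
    set p := deltaStar δ q s with hp
    have hqp : f q ≤ f p := mono s q
    have h2 : f p ≤ f (δ p x) := hf p x
    have h3 : f (δ p x) ≤ f q := by
      have := mono t (δ p x)
      simpa [deltaStar] using h1 ▸ this
    have hpq : p = q := f.injective (le_antisymm (le_trans h2 h3) hqp)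
    rw [hpq] at h2 h3
    have : f (δ q x) = f q := le_antisymm h3 (hf q x)
    exact f.injective this
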